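/- arXiv:2403.00622 — 3 statements merged into one kernel-verified Lean document; each statement's English description precedes it below -/
import Mathlib

section
/- Block shortening is valid: for N = 2^n, S < N, and the shortening set Z = {N−S, ..., N−1}, every entry G_N(i, z) with i ∉ Z and z ∈ Z equals 0; consequently, for any codeword x = u·G_N with u_z = 0 for all z ∈ Z, the coded bits x_z are 0 for all z ∈ Z. -/
open Matrix

/-- The 2×2 polar kernel over `F₂`. -/
def G2 : Matrix (Fin 2) (Fin 2) (ZMod 2) := !![1, 0; 1, 1]

/-- `GN n = G2^{⊗n}`, the `n`-fold Kronecker power of `G2` over `F₂`. -/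
def GN : (n : ℕ) → Matrix (Fin (2 ^ n)) (Fin (2 ^ n)) (ZMod 2)
  | 0 => 1
  | n + 1 =>
    Matrix.reindex (finProdFinEquiv.trans (finCongr (by ring)))
      (finProdFinEquiv.trans (finCongr (by ring)))
      (Matrix.kroneckerMap (· * ·) G2 (GN n))

/-!
`G2` is lower triangular, and a Kronecker product of lower-triangular matrices is lower triangular
for the lexicographic order on index pairs, which `finProdFinEquiv` carries to the usual order on
`Fin (m * n)`. Hence `GN n` is lower triangular: `G_N(i, z) = 0` whenever `i < z`, and the entries
of `u · G_N` on a final segment only see the entries of `u` on that segment.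
-/

open OrderDual

theorem strictMono_finProdFinEquiv_ofLex {m n : ℕ} :
    StrictMono fun x : Fin m ×ₗ Fin n => finProdFinEquiv (ofLex x) := by
  intro x y h
  rw [Fin.lt_def, finProdFinEquiv_apply_val, finProdFinEquiv_apply_val]
  rcases Prod.Lex.lt_iff.mp h with h₁ | ⟨h₁, h₂⟩
  · have := Nat.mul_le_mul_left n (Nat.succ_le_of_lt h₁)
    have := (ofLex x).2.isLt
    rw [Nat.mul_succ] at *
    omega
  · rw [h₁]
    exact Nat.add_lt_add_right h₂ _

namespace Matrix

theorem IsLowerTriangular.kroneckerMap_mul {α β R : Type*} [LT α] [LT β] [MulZeroClass R]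
    {A : Matrix α α R} {B : Matrix β β R} (hA : A.IsLowerTriangular) (hB : B.IsLowerTriangular) :
    (kroneckerMap (· * ·) A B).BlockTriangular (toDual ∘ toLex) := by
  intro i j hij
  rcases Prod.Lex.toLex_lt_toLex.mp (toDual_lt_toDual.mp hij) with h₁ | ⟨h₁, h₂⟩
  · simp [hA (toDual_lt_toDual.mpr h₁)]
  · simp [hB (toDual_lt_toDual.mpr h₂)]

theorem IsLowerTriangular.vecMul_apply_eq_zero {m R : Type*} [LinearOrder m] [Fintype m]
    [NonUnitalNonAssocSemiring R] {M : Matrix m m R} (hM : M.IsLowerTriangular) {u : m → R}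
    {z : m} (hu : ∀ i, z ≤ i → u i = 0) : vecMul u M z = 0 := by
  refine Finset.sum_eq_zero fun i _ => ?_
  rcases le_or_gt z i with hzi | hiz
  · simp [hu i hzi]
  · simp [hM (toDual_lt_toDual.mpr hiz)]

end Matrix

theorem G2_isLowerTriangular : G2.IsLowerTriangular := by
  intro i j h
  rw [toDual_lt_toDual] at h
  fin_cases i <;> fin_cases j <;> first | rfl | simp at h

theorem GN_isLowerTriangular (n : ℕ) : (GN n).IsLowerTriangular := by
  induction n with
  | zero => exact blockTriangular_one
  | succ n ih =>
    rw [GN, IsLowerTriangular, blockTriangular_reindex_iff]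
    intro i j hij
    refine G2_isLowerTriangular.kroneckerMap_mul ih (toDual_lt_toDual.mpr ?_)
    exact strictMono_finProdFinEquiv_ofLex.lt_iff_lt.mp (by simpa using hij)

theorem block_shortening_valid_general (n S : ℕ) :
    (∀ i z : Fin (2 ^ n), ¬ (2 ^ n - S ≤ i.val) → 2 ^ n - S ≤ z.val → GN n i z = 0) ∧
    (∀ u : Fin (2 ^ n) → ZMod 2,
      (∀ z : Fin (2 ^ n), 2 ^ n - S ≤ z.val → u z = 0) →
      ∀ z : Fin (2 ^ n), 2 ^ n - S ≤ z.val → Matrix.vecMul u (GN n) z = 0) := by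
  refine ⟨fun i z hi hz => GN_isLowerTriangular n (toDual_lt_toDual.mpr ?_),
    fun u hu z hz => (GN_isLowerTriangular n).vecMul_apply_eq_zero fun i hzi => hu i ?_⟩
  · rw [Fin.lt_def]
    omega
  · rw [Fin.le_def] at hzi
    omega

/-- Block shortening is valid: with `N = 2^n`, `S < N`, and shortening set
`Z = {N−S, …, N−1}`, every entry `G_N(i,z)` with `i ∉ Z`, `z ∈ Z` is `0`, and
every codeword `x = u·G_N` with `u` vanishing on `Z` satisfies `x_z = 0` for `z ∈ Z`. -/
theorem block_shortening_valid (n S : ℕ) (hS : S < 2 ^ n) :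
    (∀ i z : Fin (2 ^ n), ¬ (2 ^ n - S ≤ i.val) → 2 ^ n - S ≤ z.val → GN n i z = 0) ∧
    (∀ u : Fin (2 ^ n) → ZMod 2,
      (∀ z : Fin (2 ^ n), 2 ^ n - S ≤ z.val → u z = 0) →
      ∀ z : Fin (2 ^ n), 2 ^ n - S ≤ z.val → Matrix.vecMul u (GN n) z = 0) :=
  block_shortening_valid_general n S
end

section
/- Bit-reversal shortening is valid: for N = 2^n and Z = {br(N−S), ..., br(N−1)} where br is the n-bit bit-reversal permutation, every entry G_N(i, z) with i ∉ Z and z ∈ Z equals 0. -/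
open Matrix

/-- The `n`-bit bit-reversal permutation on `{0, …, 2^n − 1}`. -/
def br (n k : ℕ) : ℕ := ∑ i ∈ Finset.range n, if k.testBit i then 2 ^ (n - 1 - i) else 0

/-!
An entry `G_N(i, z)` can be nonzero only if the bits of `z` are among those of `i`. Bit reversal
preserves this domination, so then `br z ≤ br i` as numbers. Since `br` is an involution on
`{0, …, N − 1}`, `Z` is the set of `z` with `br z ≥ N − S`, which is therefore closed upwards
along nonzero entries: `z ∈ Z` and `G_N(i, z) ≠ 0` give `br i ≥ br z ≥ N − S`, i.e. `i ∈ Z`.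
-/

lemma br_succ (n k : ℕ) :
    br (n + 1) k = 2 * br n k + (if k.testBit n then 1 else 0) := by
  rw [br, br, Finset.sum_range_succ, Finset.mul_sum]
  congr 1
  · refine Finset.sum_congr rfl fun i hi => ?_
    rw [show n + 1 - 1 - i = n - 1 - i + 1 by grind, pow_succ']
    split_ifs <;> rfl
  · simp

lemma testBit_br (n k j : ℕ) :
    (br n k).testBit j = (decide (j < n) && k.testBit (n - 1 - j)) := by
  induction n generalizing j with
  | zero => simp [br]
  | succ n ih =>
    cases j with
    | zero =>
      rw [br_succ, Nat.testBit_zero]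
      cases h : k.testBit n <;> simp [h]
    | succ j =>
      have hhalf : (2 * br n k + (if k.testBit n then 1 else 0)) / 2 = br n k := by
        split <;> omega
      rw [br_succ, Nat.testBit_succ, hhalf, ih, show n + 1 - 1 - (j + 1) = n - 1 - j by omega]
      simp

lemma br_lt (n k : ℕ) : br n k < 2 ^ n :=
  Nat.lt_pow_two_of_testBit _ fun j hj => by simp [testBit_br, Nat.not_lt.mpr hj]

lemma br_br_of_lt {n k : ℕ} (hk : k < 2 ^ n) : br n (br n k) = k := by
  refine Nat.eq_of_testBit_eq fun j => ?_
  rw [testBit_br, testBit_br]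
  by_cases hj : j < n
  · simp [hj, show n - 1 - (n - 1 - j) = j by omega, show n - 1 - j < n by omega]
  · have hkj : k < 2 ^ j := hk.trans_le (Nat.pow_le_pow_right two_pos (not_lt.mp hj))
    simp [hj, Nat.testBit_lt_two_pow hkj]

lemma br_le_br_of_testBit_imp {n a b : ℕ} (h : ∀ k, a.testBit k → b.testBit k) :
    br n a ≤ br n b :=
  Finset.sum_le_sum fun k _ => by
    by_cases ha : a.testBit k
    · simp [ha, h k ha]
    · simp [ha]

-- `finProdFinEquiv` sends `(a, x)` to `x + 2 ^ n * a`: the `G2` factor acts on the top bit.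
lemma GN_succ_apply (n : ℕ) (i z : Fin (2 ^ (n + 1))) :
    GN (n + 1) i z =
      G2 ⟨i / 2 ^ n, Nat.div_lt_of_lt_mul (by rw [← pow_succ]; exact i.isLt)⟩
          ⟨z / 2 ^ n, Nat.div_lt_of_lt_mul (by rw [← pow_succ]; exact z.isLt)⟩ *
        GN n ⟨i % 2 ^ n, Nat.mod_lt _ (by positivity)⟩ ⟨z % 2 ^ n, Nat.mod_lt _ (by positivity)⟩ :=
  rfl

lemma testBit_of_G2_ne_zero {a b : Fin 2} (h : G2 a b ≠ 0) {k : ℕ} (hb : b.val.testBit k) :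
    a.val.testBit k := by
  fin_cases a <;> fin_cases b <;> simp_all [G2]

lemma testBit_of_GN_ne_zero {n : ℕ} {i z : Fin (2 ^ n)} (h : GN n i z ≠ 0) {k : ℕ}
    (hz : z.val.testBit k) : i.val.testBit k := by
  induction n generalizing k with
  | zero =>
    obtain rfl : i = z := by_contra fun hiz => h (one_apply_ne hiz)
    exact hz
  | succ n ih =>
    rw [GN_succ_apply] at h
    rcases lt_or_ge k n with hk | hk
    · have hlow := ih (right_ne_zero_of_mul h) (k := k)
        (by simpa [Nat.testBit_mod_two_pow, hk] using hz)
      simpa [Nat.testBit_mod_two_pow, hk] using hlow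
    · have hhigh := testBit_of_G2_ne_zero (left_ne_zero_of_mul h) (k := k - n)
        (by simpa [Nat.testBit_div_two_pow, hk] using hz)
      simpa [Nat.testBit_div_two_pow, hk] using hhigh

theorem br_shortening_valid_general (n S : ℕ)
    (Z : Set (Fin (2 ^ n)))
    (hZ : Z = {z : Fin (2 ^ n) | ∃ m : ℕ, 2 ^ n - S ≤ m ∧ m < 2 ^ n ∧ br n m = z.val}) :
    ∀ i z : Fin (2 ^ n), i ∉ Z → z ∈ Z → GN n i z = 0 := by
  subst hZ
  rintro i z hi ⟨m, hSm, hm, hmz⟩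
  by_contra h
  refine hi ⟨br n i, ?_, br_lt n i, br_br_of_lt i.isLt⟩
  calc 2 ^ n - S ≤ m := hSm
    _ = br n z := by rw [← hmz, br_br_of_lt hm]
    _ ≤ br n i := br_le_br_of_testBit_imp fun _ => testBit_of_GN_ne_zero h

/-- Bit-reversal shortening is valid: with `N = 2^n` and
`Z = {br(N−S), …, br(N−1)}`, every entry `G_N(i,z)` with `i ∉ Z`, `z ∈ Z` is `0`. -/
theorem br_shortening_valid (n S : ℕ) (hS : S < 2 ^ n)
    (Z : Set (Fin (2 ^ n)))
    (hZ : Z = {z : Fin (2 ^ n) | ∃ m : ℕ, 2 ^ n - S ≤ m ∧ m < 2 ^ n ∧ br n m = z.val}) :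
    ∀ i z : Fin (2 ^ n), i ∉ Z → z ∈ Z → GN n i z = 0 :=
  br_shortening_valid_general n S Z hZ
end

section
/- Invariance of the shortening constraint under automorphisms fixing Z: let π be a permutation of {0,...,N−1} with permutation matrix T such that the transformed generator G_T = G_N·T·G_N preserves the information set I (i.e., the induced code equals the original G_N-coset code), and suppose π(Z) = Z. If G_N(I, Z) = 0 then G_T(I, Z) = 0. -/
open Matrix

/-- The permutation matrix of `π`. -/
def permMat {N : ℕ} (π : Equiv.Perm (Fin N)) : Matrix (Fin N) (Fin N) (ZMod 2) :=
  fun i j => if π i = j then 1 else 0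


lemma G2_mul_G2 : G2 * G2 = 1 := by decide

lemma GN_mul_GN (n : ℕ) : GN n * GN n = 1 := by
  induction n with
  | zero => simp [GN]
  | succ n ih =>
    show (Matrix.reindex _ _ _) * (Matrix.reindex _ _ _) = 1
    simp only [Matrix.reindex_apply]
    rw [Matrix.submatrix_mul_equiv,
      ← Matrix.mul_kronecker_mul, G2_mul_G2, ih,
      Matrix.one_kronecker_one, Matrix.submatrix_one_equiv]

lemma GN_diag (n : ℕ) (i : Fin (2 ^ n)) : GN n i i = 1 := by
  induction n with
  | zero => exact Matrix.one_apply_eq i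
  | succ n ih =>
    show (Matrix.reindex _ _ _) i i = 1
    simp only [Matrix.reindex_apply]
    rw [Matrix.submatrix_apply, Matrix.kroneckerMap_apply, ih]
    have : ∀ x : Fin 2, G2 x x = 1 := by decide
    rw [this, one_mul]

/-- Invariance of the shortening constraint under automorphisms fixing `Z`: if the
transformed generator `G_T = G_N·T·G_N` preserves the `G_N`-coset code with
information set `I` and `π(Z) = Z`, then `G_N(I,Z) = 0` implies `G_T(I,Z) = 0`. -/
theorem shortening_constraint_invariant (n : ℕ) (π : Equiv.Perm (Fin (2 ^ n)))
    (I Z : Set (Fin (2 ^ n)))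
    (hCode : ∀ u : Fin (2 ^ n) → ZMod 2, (∀ i, i ∉ I → u i = 0) →
      ∃ u' : Fin (2 ^ n) → ZMod 2, (∀ i, i ∉ I → u' i = 0) ∧
        Matrix.vecMul u' (GN n) = Matrix.vecMul u (GN n * permMat π))
    (hZ : π '' Z = Z)
    (hShort : ∀ i ∈ I, ∀ z ∈ Z, GN n i z = 0) :
    ∀ i ∈ I, ∀ z ∈ Z, (GN n * permMat π * GN n) i z = 0 := by
  intro i hi z hz
  have hzI : z ∉ I := by
    intro hzi
    have h := hShort z hzi z hz
    rw [GN_diag] at h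
    exact one_ne_zero h
  set e : Fin (2 ^ n) → ZMod 2 := fun j => if j = i then 1 else 0 with he
  obtain ⟨u', hu's, hu'⟩ := hCode e (by
    intro j hj
    simp only [he]
    exact if_neg fun hji => hj (by rw [hji]; exact hi))
  have h2 : (GN n * permMat π) i = Matrix.vecMul e (GN n * permMat π) := by
    funext k
    simp [Matrix.vecMul, dotProduct, he, Finset.sum_ite_eq']
  have h1 : (GN n * permMat π * GN n) i z
      = Matrix.vecMul ((GN n * permMat π) i) (GN n) z := by
    simp [Matrix.mul_apply, Matrix.vecMul, dotProduct]
  rw [h1, h2, ← hu', Matrix.vecMul_vecMul, GN_mul_GN, Matrix.vecMul_one]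
  exact hu's z hzI
end
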